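/- Let u_1,…,u_K be vectors in an inner product space with ∑_{ℓ=1}^K u_ℓ = 0, and let C = [c_{ℓk}] be a K×K symmetric doubly stochastic matrix such that ∑_{k,ℓ} (c_{ℓk} - 1/K)⟨u_k, u_ℓ⟩ ≤ λ ∑_k ‖u_k‖² for some λ < 1. Then ∑_{k=1}^K ∑_{ℓ=1}^K c_{ℓk} ‖u_k - u_ℓ‖² ≥ 2(1-λ) ∑_{k=1}^K ‖u_k‖². -/

import Mathlib

open Finset

section WeightedDispersion

variable {ι E : Type*} [Fintype ι] [NormedAddCommGroup E] [InnerProductSpace ℝ E]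

/-- Shifting all weights of the Gram form by a constant does not change it when the vectors
sum to zero, since `∑ k, ∑ l, ⟪u k, u l⟫ = ‖∑ k, u k‖ ^ 2`. -/
lemma sum_sum_sub_const_mul_inner_of_sum_eq_zero (u : ι → E) (hsum : ∑ k, u k = 0)
    (c : ι → ι → ℝ) (a : ℝ) :
    ∑ k, ∑ l, (c l k - a) * inner ℝ (u k) (u l) = ∑ k, ∑ l, c l k * inner ℝ (u k) (u l) := by
  have hrow_zero (k : ι) : ∑ l, inner ℝ (u k) (u l) = 0 := by
    rw [← inner_sum, hsum, inner_zero_right]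
  simp only [sub_mul, sum_sub_distrib, ← mul_sum, hrow_zero, mul_zero, sub_zero]

lemma sum_sum_mul_norm_sub_sq (u : ι → E) (c : ι → ι → ℝ)
    (hrow : ∀ k, ∑ l, c l k = 1) (hcol : ∀ l, ∑ k, c l k = 1) :
    ∑ k, ∑ l, c l k * ‖u k - u l‖ ^ 2
      = 2 * ∑ k, ‖u k‖ ^ 2 - 2 * ∑ k, ∑ l, c l k * inner ℝ (u k) (u l) := by
  have hfirst : ∑ k, ∑ l, c l k * ‖u k‖ ^ 2 = ∑ k, ‖u k‖ ^ 2 := by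
    simp only [← sum_mul, hrow, one_mul]
  have hsecond : ∑ k, ∑ l, c l k * ‖u l‖ ^ 2 = ∑ k, ‖u k‖ ^ 2 := by
    rw [sum_comm]
    simp only [← sum_mul, hcol, one_mul]
  calc ∑ k, ∑ l, c l k * ‖u k - u l‖ ^ 2
      = ∑ k, ∑ l, (c l k * ‖u k‖ ^ 2 + c l k * ‖u l‖ ^ 2
          - 2 * (c l k * inner ℝ (u k) (u l))) := by
        refine sum_congr rfl fun k _ => sum_congr rfl fun l _ => ?_
        rw [norm_sub_sq_real]
        ring
    _ = 2 * ∑ k, ‖u k‖ ^ 2 - 2 * ∑ k, ∑ l, c l k * inner ℝ (u k) (u l) := by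
        simp only [sum_sub_distrib, sum_add_distrib, ← mul_sum, hfirst, hsecond]
        ring

end WeightedDispersion

theorem stmt2_general {E : Type*} [NormedAddCommGroup E] [InnerProductSpace ℝ E]
    (K : ℕ) (u : Fin K → E) (hsum : ∑ k, u k = 0)
    (c : Fin K → Fin K → ℝ)
    (hrow : ∀ k, ∑ l, c l k = 1) (hcol : ∀ l, ∑ k, c l k = 1)
    (lam : ℝ)
    (hquad : ∑ k, ∑ l, (c l k - 1 / K) * (inner ℝ (u k) (u l) : ℝ)
      ≤ lam * ∑ k, ‖u k‖ ^ 2) :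
    ∑ k, ∑ l, c l k * ‖u k - u l‖ ^ 2 ≥ 2 * (1 - lam) * ∑ k, ‖u k‖ ^ 2 := by
  rw [sum_sum_sub_const_mul_inner_of_sum_eq_zero u hsum] at hquad
  rw [sum_sum_mul_norm_sub_sq u c hrow hcol]
  linarith

theorem stmt2 {E : Type*} [NormedAddCommGroup E] [InnerProductSpace ℝ E]
    (K : ℕ) (u : Fin K → E) (hsum : ∑ k, u k = 0)
    (c : Fin K → Fin K → ℝ)
    (hnn : ∀ k l, 0 ≤ c l k) (hsymm : ∀ k l, c l k = c k l)
    (hrow : ∀ k, ∑ l, c l k = 1) (hcol : ∀ l, ∑ k, c l k = 1)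
    (lam : ℝ) (hlam : lam < 1)
    (hquad : ∑ k, ∑ l, (c l k - 1 / K) * (inner ℝ (u k) (u l) : ℝ)
      ≤ lam * ∑ k, ‖u k‖ ^ 2) :
    ∑ k, ∑ l, c l k * ‖u k - u l‖ ^ 2 ≥ 2 * (1 - lam) * ∑ k, ‖u k‖ ^ 2 :=
  stmt2_general K u hsum c hrow hcol lam hquad
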